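/- Let (X, B, μ, α) be an invertible ergodic measure-preserving system and f ∈ L²(X) with ∫ f dμ = 0. Under the Gordin conditions Σ_{n>0} ‖E(f | A_n)‖₂ < ∞ and Σ_{n<0} ‖f − E(f | A_n)‖₂ < ∞ (for a non-increasing filtration A_n = α^{−n}(A)), f admits a decomposition f = (φ∘α − φ) + ψ with φ, ψ ∈ L²(X), where ψ∘α^n is a reverse martingale difference sequence with respect to the σ-algebras A_n. -/

import Mathlib

/-!
Write `U g = g ∘ α` and `P n = E(· | A_n)` on `L²`, so that `U^k P_n = P_{n+k} U^k`, and split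
`f = P₁ f + (f - P₁ f)`. Both parts telescope: with `c m = P₁ U^{-m} f` resp.
`c m = (1 - P₁) U^m f` one has `c m - c (m + 1) = U u_m - u_m + (P₀ - P₁) x_m` for
`u_m = P₀ U^{-m-1} f`, `x_m = U^{-m-1} f` resp. `u_m = (P₀ - 1) U^m f`, `x_m = U^m f`.
Since `U` is an isometry, the Gordin conditions say exactly that `c` and `u` are absolutely
summable, so `f = U φ - φ + ψ` with `φ = ∑ u_m` and `ψ = ∑ (P₀ - P₁) x_m`. Each term of `ψ` is
fixed by `P₀` and killed by `P₁`; transported by `U^n` this is the reverse martingale difference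
property.
-/

open MeasureTheory

theorem hasSum_of_coboundary_eq_telescoping {E : Type*} [AddCommGroup E] [TopologicalSpace E]
    [IsTopologicalAddGroup E] (T : E →+ E) (hT : Continuous T) {u d c : ℕ → E} {a b : E}
    (hu : HasSum u a) (hc : HasSum c b)
    (h : ∀ m, T (u m) - u m + d m = c m - c (m + 1)) :
    HasSum d (c 0 - (T a - a)) := by
  have hd : d = fun m => (c m - c (m + 1)) - (T (u m) - u m) :=
    funext fun m => by rw [← h m]; abel
  have hc' : HasSum (fun m => c (m + 1)) (b - c 0) := by
    simpa using (hasSum_nat_add_iff' 1).mpr hc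
  rw [hd, ← sub_sub_cancel b (c 0)]
  exact (hc.sub hc').sub ((hu.map T hT).sub hu)

/-- On `L²`, `shift k` is `g ↦ g ∘ α^k` and `proj n` is `E(· | α^{-n} A)`. -/
structure StationaryFiltration (E : Type*) [NormedAddCommGroup E] [NormedSpace ℝ E] where
  shift : ℤ → E →ₗᵢ[ℝ] E
  proj : ℤ → E →L[ℝ] E
  shift_shift : ∀ j k g, shift j (shift k g) = shift (j + k) g
  shift_zero : ∀ g, shift 0 g = g
  shift_proj : ∀ k n g, shift k (proj n g) = proj (n + k) (shift k g)
  proj_proj_of_le : ∀ {n m}, n ≤ m → ∀ g, proj n (proj m g) = proj m g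
  proj_proj_of_ge : ∀ {n m}, m ≤ n → ∀ g, proj n (proj m g) = proj n g

namespace StationaryFiltration

variable {E : Type*} [NormedAddCommGroup E] [NormedSpace ℝ E] (S : StationaryFiltration E)

theorem norm_proj_shift (n k : ℤ) (g : E) :
    ‖S.proj n (S.shift k g)‖ = ‖S.proj (n - k) g‖ := by
  rw [← sub_add_cancel n k, ← S.shift_proj, LinearIsometry.norm_map, add_sub_cancel_right]

theorem norm_shift_sub_proj_shift (n k : ℤ) (g : E) :
    ‖S.shift k g - S.proj n (S.shift k g)‖ = ‖g - S.proj (n - k) g‖ := by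
  rw [← sub_add_cancel n k, ← S.shift_proj, ← map_sub, LinearIsometry.norm_map,
    add_sub_cancel_right]

theorem proj_zero_and_proj_one_of_hasSum {x : ℕ → E} {s : E}
    (hs : HasSum (fun m => S.proj 0 (x m) - S.proj 1 (x m)) s) :
    S.proj 0 s = s ∧ S.proj 1 s = 0 := by
  have h0 := hs.mapL (S.proj 0)
  have h1 := hs.mapL (S.proj 1)
  simp only [map_sub, S.proj_proj_of_le le_rfl,
    S.proj_proj_of_le zero_le_one, S.proj_proj_of_ge zero_le_one, sub_self] at h0 h1
  exact ⟨h0.unique hs, h1.unique hasSum_zero⟩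

variable [CompleteSpace E] (F : E)

theorem exists_coboundary_proj_one
    (hF : Summable fun m : ℕ => ‖S.proj ((m : ℤ) + 1) F‖) :
    ∃ φ ψ : E, S.proj 1 F = S.shift 1 φ - φ + ψ ∧ S.proj 0 ψ = ψ ∧ S.proj 1 ψ = 0 := by
  set c : ℕ → E := fun m => S.proj 1 (S.shift (-m) F)
  set u : ℕ → E := fun m => S.proj 0 (S.shift (-m - 1) F)
  have hc : Summable c := Summable.of_norm <| hF.congr fun m => by
    rw [S.norm_proj_shift, sub_neg_eq_add, add_comm]
  have hu : Summable u := Summable.of_norm <| hF.congr fun m => by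
    rw [S.norm_proj_shift, zero_sub, neg_sub, sub_neg_eq_add, add_comm]
  have htel : ∀ m, S.shift 1 (u m) - u m
      + (S.proj 0 (S.shift (-m - 1) F) - S.proj 1 (S.shift (-m - 1) F)) = c m - c (m + 1) := by
    intro m
    have hcu : S.shift 1 (u m) = c m := by
      simp only [u, c, S.shift_proj, S.shift_shift, zero_add, add_sub_cancel]
    have hc_succ : c (m + 1) = S.proj 1 (S.shift (-m - 1) F) := by
      simp only [c, Nat.cast_add, Nat.cast_one, neg_add']
    rw [hcu, hc_succ]
    abel
  have hψ := hasSum_of_coboundary_eq_telescoping (S.shift 1).toLinearMap.toAddMonoidHom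
    (S.shift 1).continuous hu.hasSum hc.hasSum htel
  have hc0 : c 0 = S.proj 1 F := by simp only [c, Nat.cast_zero, neg_zero, S.shift_zero]
  exact ⟨∑' m, u m, _, hc0 ▸ (add_sub_cancel _ _).symm, S.proj_zero_and_proj_one_of_hasSum hψ⟩

theorem exists_coboundary_sub_proj_one
    (hF : Summable fun m : ℕ => ‖F - S.proj (-(m : ℤ) - 1) F‖) :
    ∃ φ ψ : E, F - S.proj 1 F = S.shift 1 φ - φ + ψ ∧ S.proj 0 ψ = ψ ∧ S.proj 1 ψ = 0 := by
  set c : ℕ → E := fun m => S.shift m F - S.proj 1 (S.shift m F)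
  set u : ℕ → E := fun m => S.proj 0 (S.shift m F) - S.shift m F
  have hc : Summable c := Summable.of_norm <| (summable_nat_add_iff 2).mp <| hF.congr fun m => by
    rw [S.norm_shift_sub_proj_shift, show (1 : ℤ) - (m + 2 : ℕ) = -m - 1 by push_cast; ring]
  have hu : Summable u := Summable.of_norm <| (summable_nat_add_iff 1).mp <| hF.congr fun m => by
    rw [norm_sub_rev (S.proj 0 _), S.norm_shift_sub_proj_shift,
      show (0 : ℤ) - (m + 1 : ℕ) = -m - 1 by push_cast; ring]
  have htel : ∀ m, S.shift 1 (u m) - u m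
      + (S.proj 0 (S.shift m F) - S.proj 1 (S.shift m F)) = c m - c (m + 1) := by
    intro m
    have hcu : S.shift 1 (u m) = - c (m + 1) := by
      simp only [u, c, map_sub, S.shift_proj, S.shift_shift, zero_add, Nat.cast_add, Nat.cast_one,
        add_comm (1 : ℤ), neg_sub]
    rw [hcu]
    simp only [c, u]
    abel
  have hψ := hasSum_of_coboundary_eq_telescoping (S.shift 1).toLinearMap.toAddMonoidHom
    (S.shift 1).continuous hu.hasSum hc.hasSum htel
  have hc0 : c 0 = F - S.proj 1 F := by simp only [c, Nat.cast_zero, S.shift_zero]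
  exact ⟨∑' m, u m, _, hc0 ▸ (add_sub_cancel _ _).symm, S.proj_zero_and_proj_one_of_hasSum hψ⟩

theorem exists_gordin_decomposition
    (hfut : Summable fun m : ℕ => ‖S.proj ((m : ℤ) + 1) F‖)
    (hpast : Summable fun m : ℕ => ‖F - S.proj (-(m : ℤ) - 1) F‖) :
    ∃ φ ψ : E, F = S.shift 1 φ - φ + ψ ∧
      ∀ n, S.proj n (S.shift n ψ) = S.shift n ψ ∧ S.proj (n + 1) (S.shift n ψ) = 0 := by
  obtain ⟨φ₁, ψ₁, hF₁, hψ₁⟩ := S.exists_coboundary_proj_one F hfut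
  obtain ⟨φ₂, ψ₂, hF₂, hψ₂⟩ := S.exists_coboundary_sub_proj_one F hpast
  have h0 : S.proj 0 (ψ₁ + ψ₂) = ψ₁ + ψ₂ := by rw [map_add, hψ₁.1, hψ₂.1]
  have h1 : S.proj 1 (ψ₁ + ψ₂) = 0 := by rw [map_add, hψ₁.2, hψ₂.2, add_zero]
  refine ⟨φ₁ + φ₂, ψ₁ + ψ₂, ?_, fun n => ⟨?_, ?_⟩⟩
  · rw [map_add, ← add_sub_cancel (S.proj 1 F) F, hF₂, hF₁]
    abel
  · have h := S.shift_proj n 0 (ψ₁ + ψ₂)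
    rwa [h0, zero_add, eq_comm] at h
  · have h := S.shift_proj n 1 (ψ₁ + ψ₂)
    rwa [h1, map_zero, add_comm, eq_comm] at h

end StationaryFiltration

theorem MeasurableSpace.comap_comap_perm_zpow {X : Type*} (A : MeasurableSpace X)
    (e : Equiv.Perm X) (n k : ℤ) :
    (A.comap ⇑(e ^ n)).comap ⇑(e ^ k) = A.comap ⇑(e ^ (n + k)) := by
  rw [MeasurableSpace.comap_comp, ← Equiv.Perm.coe_mul, ← zpow_add]

namespace MeasureTheory.MeasurePreserving

variable {X : Type*} [m0 : MeasurableSpace X] {μ : Measure X}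

theorem perm_zpow {e : Equiv.Perm X}
    (he : MeasurePreserving e μ μ) (he' : MeasurePreserving e.symm μ μ) (k : ℤ) :
    MeasurePreserving ⇑(e ^ k) μ μ := by
  obtain ⟨k, rfl | rfl⟩ := k.eq_nat_or_neg
  · rw [zpow_natCast, ← Equiv.Perm.iterate_eq_pow]
    exact he.iterate k
  · rw [zpow_neg, zpow_natCast, ← inv_pow, ← Equiv.Perm.iterate_eq_pow]
    exact he'.iterate k

theorem measurableEmbedding_perm_zpow {e : Equiv.Perm X}
    (he : MeasurePreserving e μ μ) (he' : MeasurePreserving e.symm μ μ) (k : ℤ) :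
    MeasurableEmbedding ⇑(e ^ k) :=
  MeasurableEquiv.measurableEmbedding
    { toEquiv := e ^ k
      measurable_toFun := (he.perm_zpow he' k).measurable
      measurable_invFun := by
        rw [← Equiv.Perm.inv_def, ← zpow_neg]
        exact (he.perm_zpow he' (-k)).measurable }

theorem condExp_comp {Y E : Type*} [NormedAddCommGroup E]
    [NormedSpace ℝ E] [CompleteSpace E] {n : MeasurableSpace Y} [mY : MeasurableSpace Y]
    {ν : Measure Y} [IsFiniteMeasure μ] {f : X → Y} (hf : MeasurePreserving f μ ν)
    (hfe : MeasurableEmbedding f) (hn : n ≤ mY) {g : Y → E} (hg : Integrable g ν) :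
    ν[g | n] ∘ f =ᵐ[μ] μ[g ∘ f | n.comap f] := by
  have : IsFiniteMeasure ν := hf.map_eq ▸ inferInstance
  have hn' : n.comap f ≤ m0 := (MeasurableSpace.comap_mono hn).trans hf.measurable.comap_le
  refine ae_eq_condExp_of_forall_setIntegral_eq hn' ((hf.integrable_comp_emb hfe).mpr hg)
    (fun s _ _ => ((hf.integrable_comp_emb hfe).mpr integrable_condExp).integrableOn) ?_ ?_
  · rintro s ⟨t, ht, rfl⟩ -
    change ∫ x in f ⁻¹' t, ν[g | n] (f x) ∂μ = ∫ x in f ⁻¹' t, g (f x) ∂μ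
    rw [hf.setIntegral_preimage_emb hfe, hf.setIntegral_preimage_emb hfe,
      setIntegral_condExp hn hg ht]
  · exact (stronglyMeasurable_condExp.comp_measurable (comap_measurable f)).aestronglyMeasurable

end MeasureTheory.MeasurePreserving

section

variable {X : Type*} {m m' : MeasurableSpace X} [m0 : MeasurableSpace X] {μ : Measure X}

noncomputable def condExpL2CLM (μ : Measure X) (hm : m ≤ m0) :
    Lp ℝ 2 μ →L[ℝ] Lp ℝ 2 μ :=
  (lpMeas ℝ ℝ m 2 μ).subtypeL.comp (condExpL2 ℝ ℝ hm)

theorem condExpL2CLM_congr (h : m = m') (hm : m ≤ m0) (hm' : m' ≤ m0) :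
    condExpL2CLM μ hm = condExpL2CLM μ hm' := by
  subst h; rfl

variable [IsFiniteMeasure μ]

theorem condExpL2CLM_ae_eq_condExp (hm : m ≤ m0) (g : Lp ℝ 2 μ) :
    condExpL2CLM μ hm g =ᵐ[μ] μ[g | m] := by
  have h := (Lp.memLp g).condExpL2_ae_eq_condExp (𝕜 := ℝ) hm
  rwa [Lp.toLp_coeFn] at h

theorem condExp_ae_eq_condExpL2CLM (hm : m ≤ m0) {g : Lp ℝ 2 μ} {φ : X → ℝ} (h : g =ᵐ[μ] φ) :
    μ[φ | m] =ᵐ[μ] condExpL2CLM μ hm g :=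
  (condExp_congr_ae h.symm).trans (condExpL2CLM_ae_eq_condExp hm g).symm

theorem condExpL2CLM_condExpL2CLM_of_ge (hm : m ≤ m0) (hm' : m' ≤ m0) (hm'm : m' ≤ m)
    (g : Lp ℝ 2 μ) : condExpL2CLM μ hm (condExpL2CLM μ hm' g) = condExpL2CLM μ hm' g :=
  Lp.ext <| (condExpL2CLM_ae_eq_condExp hm _).trans <| condExp_of_aestronglyMeasurable' hm
    ((aestronglyMeasurable_condExpL2 hm' g).mono hm'm) ((Lp.memLp _).integrable one_le_two)

theorem condExpL2CLM_condExpL2CLM_of_le (hm : m ≤ m0) (hm' : m' ≤ m0) (hmm' : m ≤ m')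
    (g : Lp ℝ 2 μ) : condExpL2CLM μ hm (condExpL2CLM μ hm' g) = condExpL2CLM μ hm g :=
  Lp.ext <| calc
    _ =ᵐ[μ] μ[condExpL2CLM μ hm' g | m] := condExpL2CLM_ae_eq_condExp hm _
    _ =ᵐ[μ] μ[μ[g | m'] | m] := condExp_congr_ae (condExpL2CLM_ae_eq_condExp hm' g)
    _ =ᵐ[μ] μ[g | m] := condExp_condExp_of_le hmm' hm'
    _ =ᵐ[μ] _ := (condExpL2CLM_ae_eq_condExp hm g).symm

theorem compMeasurePreserving_condExpL2CLM {f : X → X} (hf : MeasurePreserving f μ μ)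
    (hfe : MeasurableEmbedding f) (hm : m ≤ m0) (hm' : m.comap f ≤ m0) (g : Lp ℝ 2 μ) :
    Lp.compMeasurePreserving f hf (condExpL2CLM μ hm g)
      = condExpL2CLM μ hm' (Lp.compMeasurePreserving f hf g) :=
  Lp.ext <| calc
    _ =ᵐ[μ] condExpL2CLM μ hm g ∘ f := Lp.coeFn_compMeasurePreserving _ hf
    _ =ᵐ[μ] μ[g | m] ∘ f := hf.quasiMeasurePreserving.ae_eq_comp (condExpL2CLM_ae_eq_condExp hm g)
    _ =ᵐ[μ] μ[g ∘ f | m.comap f] := hf.condExp_comp hfe hm ((Lp.memLp g).integrable one_le_two)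
    _ =ᵐ[μ] _ := condExp_ae_eq_condExpL2CLM hm' (Lp.coeFn_compMeasurePreserving g hf)

end

section Koopman

variable {X : Type*} {A : MeasurableSpace X} [m0 : MeasurableSpace X] {μ : Measure X}
  {α : Equiv.Perm X}

theorem MeasureTheory.MeasurePreserving.comap_perm_zpow_le (hα : MeasurePreserving α μ μ)
    (hα' : MeasurePreserving α.symm μ μ) (hA : A ≤ m0) (n : ℤ) : A.comap ⇑(α ^ n) ≤ m0 :=
  (MeasurableSpace.comap_mono hA).trans (hα.perm_zpow hα' n).measurable.comap_le

variable [IsFiniteMeasure μ]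

noncomputable def koopmanFiltration (hα : MeasurePreserving α μ μ)
    (hα' : MeasurePreserving α.symm μ μ) (hA : A ≤ m0)
    (hmono : ∀ n m : ℤ, n ≤ m → A.comap ⇑(α ^ m) ≤ A.comap ⇑(α ^ n)) :
    StationaryFiltration (Lp ℝ 2 μ) where
  shift k := Lp.compMeasurePreservingₗᵢ ℝ ⇑(α ^ k) (hα.perm_zpow hα' k)
  proj n := condExpL2CLM μ (hα.comap_perm_zpow_le hα' hA n)
  shift_shift j k g := by
    change Lp.compMeasurePreserving _ _ (Lp.compMeasurePreserving _ _ g)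
      = Lp.compMeasurePreserving _ _ g
    rw [← Lp.compMeasurePreserving_comp_apply]
    congr 2
    rw [← Equiv.Perm.coe_mul, ← zpow_add, add_comm]
  shift_zero g := by
    change Lp.compMeasurePreserving _ _ g = g
    simp only [zpow_zero, Equiv.Perm.coe_one, Lp.compMeasurePreserving_id_apply]
  shift_proj k n g := by
    change Lp.compMeasurePreserving _ _ (condExpL2CLM μ _ g)
      = condExpL2CLM μ _ (Lp.compMeasurePreserving _ _ g)
    have hcomap := MeasurableSpace.comap_comap_perm_zpow A α n k
    rw [compMeasurePreserving_condExpL2CLM _ (hα.measurableEmbedding_perm_zpow hα' k) _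
      (hcomap.le.trans (hα.comap_perm_zpow_le hα' hA (n + k))), condExpL2CLM_congr hcomap]
  proj_proj_of_le h g := condExpL2CLM_condExpL2CLM_of_ge _ _ (hmono _ _ h) g
  proj_proj_of_ge h g := condExpL2CLM_condExpL2CLM_of_le _ _ (hmono _ _ h) g

variable (hα : MeasurePreserving α μ μ) (hα' : MeasurePreserving α.symm μ μ) (hA : A ≤ m0)
  (hmono : ∀ n m : ℤ, n ≤ m → A.comap ⇑(α ^ m) ≤ A.comap ⇑(α ^ n))

theorem koopmanFiltration_shift_ae_eq (k : ℤ) (g : Lp ℝ 2 μ) :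
    (koopmanFiltration hα hα' hA hmono).shift k g =ᵐ[μ] fun x => g ((α ^ k) x) :=
  Lp.coeFn_compMeasurePreserving g _

end Koopman

section

variable {X : Type*} {m : MeasurableSpace X} [m0 : MeasurableSpace X] {μ : Measure X}
  [IsFiniteMeasure μ] {f : X → ℝ}

theorem norm_condExpL2CLM_toLp (hm : m ≤ m0) (hf : MemLp f 2 μ) :
    ‖condExpL2CLM μ hm (hf.toLp f)‖ = (eLpNorm μ[f | m] 2 μ).toReal := by
  rw [Lp.norm_def, eLpNorm_congr_ae (condExp_ae_eq_condExpL2CLM hm hf.coeFn_toLp).symm]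

theorem norm_toLp_sub_condExpL2CLM (hm : m ≤ m0) (hf : MemLp f 2 μ) :
    ‖hf.toLp f - condExpL2CLM μ hm (hf.toLp f)‖ = (eLpNorm (f - μ[f | m]) 2 μ).toReal := by
  rw [Lp.norm_def, eLpNorm_congr_ae ((Lp.coeFn_sub _ _).trans
    (hf.coeFn_toLp.sub (condExp_ae_eq_condExpL2CLM hm hf.coeFn_toLp).symm))]

end

theorem gordin_martingale_coboundary_decomposition_general
    {X : Type*} [m0 : MeasurableSpace X]
    (μ : Measure X) [IsProbabilityMeasure μ]
    (α : X ≃ X) (hα : MeasurePreserving α μ μ) (hαsymm : MeasurePreserving α.symm μ μ)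
    (f : X → ℝ) (hf : MemLp f 2 μ)
    (A : MeasurableSpace X) (hA : A ≤ m0)
    (An : ℤ → MeasurableSpace X)
    (hAn : ∀ n : ℤ, An n = MeasurableSpace.comap (fun x => (α ^ n : Equiv.Perm X) x) A)
    (hmono : ∀ n m : ℤ, n ≤ m → An m ≤ An n)
    (h1 : Summable fun n : ℕ => (eLpNorm (μ[f | An ((n : ℤ) + 1)]) 2 μ).toReal)
    (h2 : Summable fun n : ℕ => (eLpNorm (f - μ[f | An (-(n : ℤ) - 1)]) 2 μ).toReal) :
    ∃ φ ψ : X → ℝ, MemLp φ 2 μ ∧ MemLp ψ 2 μ ∧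
      (∀ᵐ x ∂μ, f x = (φ (α x) - φ x) + ψ x) ∧
      (∀ n : ℤ,
        (μ[(fun x => ψ ((α ^ n : Equiv.Perm X) x)) | An n]
          =ᵐ[μ] fun x => ψ ((α ^ n : Equiv.Perm X) x)) ∧
        μ[(fun x => ψ ((α ^ n : Equiv.Perm X) x)) | An (n + 1)] =ᵐ[μ] 0) := by
  -- the binder `A` would otherwise be the ambient σ-algebra for instance search
  let := m0
  obtain rfl : An = fun n => A.comap ⇑(α ^ n) := funext hAn
  set S := koopmanFiltration hα hαsymm hA hmono
  have hS : ∀ k g, S.shift k g =ᵐ[μ] fun x => g ((α ^ k) x) :=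
    koopmanFiltration_shift_ae_eq hα hαsymm hA hmono
  obtain ⟨φ, ψ, hF, hψ⟩ := S.exists_gordin_decomposition (hf.toLp f)
    (h1.congr fun _ => (norm_condExpL2CLM_toLp _ hf).symm)
    (h2.congr fun _ => (norm_toLp_sub_condExpL2CLM _ hf).symm)
  refine ⟨φ, ψ, Lp.memLp φ, Lp.memLp ψ, ?_, fun n => ⟨?_, ?_⟩⟩
  · filter_upwards [hf.coeFn_toLp, Lp.coeFn_add (S.shift 1 φ - φ) ψ,
      Lp.coeFn_sub (S.shift 1 φ) φ, hS 1 φ] with x hfx hadd hsub hshift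
    rw [← hfx, hF, hadd, Pi.add_apply, hsub, Pi.sub_apply, hshift, zpow_one]
  · calc _ =ᵐ[μ] S.proj n (S.shift n ψ) := condExp_ae_eq_condExpL2CLM _ (hS n ψ)
      _ = S.shift n ψ := by rw [(hψ n).1]
      _ =ᵐ[μ] _ := hS n ψ
  · calc _ =ᵐ[μ] S.proj (n + 1) (S.shift n ψ) := condExp_ae_eq_condExpL2CLM _ (hS n ψ)
      _ = (0 : Lp ℝ 2 μ) := by rw [(hψ n).2]
      _ =ᵐ[μ] 0 := Lp.coeFn_zero _ _ _

/-- (Gordin decomposition) Under the Gordin conditions, a zero-mean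
`f ∈ L²` decomposes as `f = (φ∘α − φ) + ψ` with `φ, ψ ∈ L²`, where `ψ∘α^n` is a
reverse martingale difference sequence with respect to the σ-algebras `A_n`
(i.e. `ψ∘α^n` is `A_n`-measurable and `E(ψ∘α^n | A_{n+1}) = 0`). -/
theorem gordin_martingale_coboundary_decomposition
    {X : Type*} [m0 : MeasurableSpace X]
    (μ : Measure X) [IsProbabilityMeasure μ]
    (α : X ≃ X) (hα : MeasurePreserving α μ μ) (hαsymm : MeasurePreserving α.symm μ μ)
    (herg : Ergodic α μ)
    (f : X → ℝ) (hf : MemLp f 2 μ) (hf0 : ∫ x, f x ∂μ = 0)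
    (A : MeasurableSpace X) (hA : A ≤ m0)
    (An : ℤ → MeasurableSpace X)
    (hAn : ∀ n : ℤ, An n = MeasurableSpace.comap (fun x => (α ^ n : Equiv.Perm X) x) A)
    (hmono : ∀ n m : ℤ, n ≤ m → An m ≤ An n)
    (h1 : Summable fun n : ℕ => (eLpNorm (μ[f | An ((n : ℤ) + 1)]) 2 μ).toReal)
    (h2 : Summable fun n : ℕ => (eLpNorm (f - μ[f | An (-(n : ℤ) - 1)]) 2 μ).toReal) :
    ∃ φ ψ : X → ℝ, MemLp φ 2 μ ∧ MemLp ψ 2 μ ∧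
      (∀ᵐ x ∂μ, f x = (φ (α x) - φ x) + ψ x) ∧
      (∀ n : ℤ,
        (μ[(fun x => ψ ((α ^ n : Equiv.Perm X) x)) | An n]
          =ᵐ[μ] fun x => ψ ((α ^ n : Equiv.Perm X) x)) ∧
        μ[(fun x => ψ ((α ^ n : Equiv.Perm X) x)) | An (n + 1)] =ᵐ[μ] 0) :=
  gordin_martingale_coboundary_decomposition_general (m0 := m0) μ α hα hαsymm f hf A hA An hAn hmono
    h1 h2
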